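/- Let m, n be positive integers and let Λ ∈ ℝ^{m+n} be dominant. Suppose there exists k ∈ {1,…,m} with (Λ+ρ, ε_k − δ_1) = 0 and (Λ, ε_k − ε_1) = 0 (the atypical type 2 unitary condition). Then for every u with k ≤ u ≤ m and every ν with 1 ≤ ν ≤ n, one has (Λ+ρ, ε_u − δ_ν) ≤ 0. -/
import Mathlib


open Finset

/-- The `i`-th standard basis vector `ε_i` (1-based, `1 ≤ i ≤ m`) of `ℝ^{m+n}`. -/
noncomputable def eps (m n : ℕ) (i : ℕ) : Fin (m + n) → ℝ :=
  fun j => if (j : ℕ) + 1 = i then 1 else 0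

/-- The `(m+μ)`-th standard basis vector `δ_μ` (1-based, `1 ≤ μ ≤ n`) of `ℝ^{m+n}`. -/
noncomputable def delta (m n : ℕ) (μ : ℕ) : Fin (m + n) → ℝ :=
  fun j => if (j : ℕ) + 1 = m + μ then 1 else 0

/-- The `a`-th component (1-based) of a vector in `ℝ^{m+n}`. -/
noncomputable def comp (m n : ℕ) (x : Fin (m + n) → ℝ) (a : ℕ) : ℝ :=
  if h : 1 ≤ a ∧ a ≤ m + n then x ⟨a - 1, by omega⟩ else 0

/-- The graded bilinear form `(Λ,Λ') = Σ_{i=1}^m Λ_i Λ'_i − Σ_{μ=1}^n Λ_{m+μ} Λ'_{m+μ}`. -/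
noncomputable def gform (m n : ℕ) (x y : Fin (m + n) → ℝ) : ℝ :=
  (∑ i ∈ Finset.Icc 1 m, comp m n x i * comp m n y i)
    - ∑ μ ∈ Finset.Icc 1 n, comp m n x (m + μ) * comp m n y (m + μ)

/-- The graded half-sum of positive roots
`ρ = (1/2) Σ_{j=1}^m (m−n−2j+1) ε_j + (1/2) Σ_{ν=1}^n (m+n−2ν+1) δ_ν`. -/
noncomputable def rho (m n : ℕ) : Fin (m + n) → ℝ :=
  (∑ j ∈ Finset.Icc 1 m, (((m : ℝ) - (n : ℝ) - 2 * (j : ℝ) + 1) / 2) • eps m n j)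
    + ∑ ν ∈ Finset.Icc 1 n, (((m : ℝ) + (n : ℝ) - 2 * (ν : ℝ) + 1) / 2) • delta m n ν

/-- Dominance: `Λ_1 ≥ … ≥ Λ_m` and `Λ_{m+1} ≥ … ≥ Λ_{m+n}`. -/
def Dominant (m n : ℕ) (Λ : Fin (m + n) → ℝ) : Prop :=
  (∀ i, 1 ≤ i → i < m → comp m n Λ (i + 1) ≤ comp m n Λ i) ∧
  (∀ μ, 1 ≤ μ → μ < n → comp m n Λ (m + μ + 1) ≤ comp m n Λ (m + μ))

lemma comp_eps (m n i a : ℕ) (ha1 : 1 ≤ a) (ha2 : a ≤ m + n) :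
    comp m n (eps m n i) a = if a = i then 1 else 0 := by
  unfold comp eps
  rw [dif_pos ⟨ha1, ha2⟩]
  simp only [Fin.val_mk]
  rw [Nat.sub_add_cancel ha1]

lemma comp_delta (m n μ a : ℕ) (ha1 : 1 ≤ a) (ha2 : a ≤ m + n) :
    comp m n (delta m n μ) a = if a = m + μ then 1 else 0 := by
  unfold comp delta
  rw [dif_pos ⟨ha1, ha2⟩]
  simp only [Fin.val_mk]
  rw [Nat.sub_add_cancel ha1]

lemma comp_add (m n : ℕ) (x y : Fin (m + n) → ℝ) (a : ℕ) :
    comp m n (x + y) a = comp m n x a + comp m n y a := by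
  unfold comp; split <;> simp

lemma comp_sub (m n : ℕ) (x y : Fin (m + n) → ℝ) (a : ℕ) :
    comp m n (x - y) a = comp m n x a - comp m n y a := by
  unfold comp; split <;> simp

lemma comp_smul (m n : ℕ) (c : ℝ) (x : Fin (m + n) → ℝ) (a : ℕ) :
    comp m n (c • x) a = c * comp m n x a := by
  unfold comp; split <;> simp

lemma comp_sum (m n : ℕ) {ι : Type*} (s : Finset ι) (f : ι → Fin (m + n) → ℝ) (a : ℕ) :
    comp m n (∑ j ∈ s, f j) a = ∑ j ∈ s, comp m n (f j) a := by
  unfold comp; split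
  · simp [Finset.sum_apply]
  · simp

lemma comp_rho_left (m n u : ℕ) (hu1 : 1 ≤ u) (hum : u ≤ m) :
    comp m n (rho m n) u = ((m : ℝ) - n - 2 * u + 1) / 2 := by
  unfold rho
  rw [comp_add, comp_sum, comp_sum]
  have h1 : ∑ j ∈ Finset.Icc 1 m,
      comp m n ((((m : ℝ) - n - 2 * j + 1) / 2) • eps m n j) u
      = ((m : ℝ) - n - 2 * u + 1) / 2 := by
    rw [Finset.sum_eq_single u]
    · rw [comp_smul, comp_eps m n u u hu1 (by omega), if_pos rfl, mul_one]
    · intro b hb hne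
      rw [comp_smul, comp_eps m n b u hu1 (by omega), if_neg (fun h => hne h.symm), mul_zero]
    · intro h
      exact absurd (Finset.mem_Icc.mpr ⟨hu1, hum⟩) h
  have h2 : ∑ ν ∈ Finset.Icc 1 n,
      comp m n ((((m : ℝ) + n - 2 * ν + 1) / 2) • delta m n ν) u = 0 := by
    apply Finset.sum_eq_zero
    intro ν hν
    rw [Finset.mem_Icc] at hν
    rw [comp_smul, comp_delta m n ν u hu1 (by omega), if_neg (by omega), mul_zero]
  rw [h1, h2, add_zero]

lemma comp_rho_right (m n ν : ℕ) (hν1 : 1 ≤ ν) (hνn : ν ≤ n) :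
    comp m n (rho m n) (m + ν) = ((m : ℝ) + n - 2 * ν + 1) / 2 := by
  unfold rho
  rw [comp_add, comp_sum, comp_sum]
  have h1 : ∑ j ∈ Finset.Icc 1 m,
      comp m n ((((m : ℝ) - n - 2 * j + 1) / 2) • eps m n j) (m + ν) = 0 := by
    apply Finset.sum_eq_zero
    intro j hj
    rw [Finset.mem_Icc] at hj
    rw [comp_smul, comp_eps m n j (m + ν) (by omega) (by omega), if_neg (by omega), mul_zero]
  have h2 : ∑ μ ∈ Finset.Icc 1 n,
      comp m n ((((m : ℝ) + n - 2 * μ + 1) / 2) • delta m n μ) (m + ν)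
      = ((m : ℝ) + n - 2 * ν + 1) / 2 := by
    rw [Finset.sum_eq_single ν]
    · rw [comp_smul, comp_delta m n ν (m + ν) (by omega) (by omega), if_pos rfl, mul_one]
    · intro b hb hne
      rw [comp_smul, comp_delta m n b (m + ν) (by omega) (by omega), if_neg (by omega), mul_zero]
    · intro h
      exact absurd (Finset.mem_Icc.mpr ⟨hν1, hνn⟩) h
  rw [h1, h2, zero_add]

lemma gform_eval (m n : ℕ) (x : Fin (m + n) → ℝ) (u ν : ℕ)
    (hu1 : 1 ≤ u) (hum : u ≤ m) (hν1 : 1 ≤ ν) (hνn : ν ≤ n) :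
    gform m n x (eps m n u - delta m n ν) = comp m n x u + comp m n x (m + ν) := by
  unfold gform
  have h1 : ∑ i ∈ Finset.Icc 1 m, comp m n x i * comp m n (eps m n u - delta m n ν) i
      = comp m n x u := by
    rw [Finset.sum_eq_single u]
    · rw [comp_sub, comp_eps m n u u hu1 (by omega), comp_delta m n ν u hu1 (by omega),
        if_pos rfl, if_neg (by omega)]
      ring
    · intro b hb hne
      rw [Finset.mem_Icc] at hb
      rw [comp_sub, comp_eps m n u b (by omega) (by omega),
        comp_delta m n ν b (by omega) (by omega), if_neg hne, if_neg (by omega)]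
      ring
    · intro h
      exact absurd (Finset.mem_Icc.mpr ⟨hu1, hum⟩) h
  have h2 : ∑ μ ∈ Finset.Icc 1 n, comp m n x (m + μ) * comp m n (eps m n u - delta m n ν) (m + μ)
      = -comp m n x (m + ν) := by
    rw [Finset.sum_eq_single ν]
    · rw [comp_sub, comp_eps m n u (m + ν) (by omega) (by omega),
        comp_delta m n ν (m + ν) (by omega) (by omega), if_neg (by omega), if_pos rfl]
      ring
    · intro b hb hne
      rw [Finset.mem_Icc] at hb
      rw [comp_sub, comp_eps m n u (m + b) (by omega) (by omega),
        comp_delta m n ν (m + b) (by omega) (by omega), if_neg (by omega), if_neg (by omega)]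
      ring
    · intro h
      exact absurd (Finset.mem_Icc.mpr ⟨hν1, hνn⟩) h
  rw [h1, h2]
  ring

lemma anti_chain (m : ℕ) (f : ℕ → ℝ) (hdec : ∀ i, 1 ≤ i → i < m → f (i + 1) ≤ f i) :
    ∀ a b, 1 ≤ a → a ≤ b → b ≤ m → f b ≤ f a := by
  intro a b ha hab hbm
  induction b with
  | zero => omega
  | succ t ih =>
    rcases Nat.lt_or_ge a (t + 1) with h | h
    · exact le_trans (hdec t (by omega) (by omega)) (ih (by omega) (by omega))
    · have : a = t + 1 := by omega
      rw [this]

/-- in the atypical type 2 unitary case with atypicality index `k`,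
`(Λ+ρ, ε_u − δ_ν) ≤ 0` for all `k ≤ u ≤ m`, `1 ≤ ν ≤ n`. -/
theorem atypical_type2_nonpos (m n : ℕ) (hm : 0 < m) (hn : 0 < n)
    (Λ : Fin (m + n) → ℝ) (hdom : Dominant m n Λ)
    (k : ℕ) (hk1 : 1 ≤ k) (hkm : k ≤ m)
    (hatyp : gform m n (Λ + rho m n) (eps m n k - delta m n 1) = 0)
    (hflat : gform m n Λ (eps m n k - eps m n 1) = 0) :
    ∀ u, k ≤ u → u ≤ m → ∀ ν, 1 ≤ ν → ν ≤ n →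
      gform m n (Λ + rho m n) (eps m n u - delta m n ν) ≤ 0 := by
  intro u hku hum ν hν1 hνn
  have hu1 : 1 ≤ u := le_trans hk1 hku
  -- evaluate hypothesis
  rw [gform_eval m n _ k 1 hk1 hkm le_rfl hn] at hatyp
  rw [comp_add, comp_add, comp_rho_left m n k hk1 hkm, comp_rho_right m n 1 le_rfl hn] at hatyp
  -- evaluate goal
  rw [gform_eval m n _ u ν hu1 hum hν1 hνn, comp_add, comp_add,
    comp_rho_left m n u hu1 hum, comp_rho_right m n ν hν1 hνn]
  -- dominance chains
  have hchain1 : comp m n Λ u ≤ comp m n Λ k :=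
    anti_chain m (fun i => comp m n Λ i) hdom.1 k u hk1 hku hum
  have hchain2 : comp m n Λ (m + ν) ≤ comp m n Λ (m + 1) :=
    anti_chain n (fun i => comp m n Λ (m + i)) (fun i h1 h2 => hdom.2 i h1 h2) 1 ν le_rfl hν1 hνn
  have hcast1 : (k : ℝ) ≤ (u : ℝ) := Nat.cast_le.mpr hku
  have hcast2 : (1 : ℝ) ≤ (ν : ℝ) := by exact_mod_cast Nat.one_le_cast.mpr hν1
  push_cast at hatyp ⊢
  linarith
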